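/- arXiv:1610.07553 — 5 statements merged into one kernel-verified Lean document; each statement's English description precedes it below -/
import Mathlib

section
/- Let Y be a set, let I be a σ-ideal of subsets of Y (I is closed under subsets and under countable unions and contains ∅), and let (B_i : i ∈ S) be a family of pairwise disjoint subsets of Y whose union ⋃_{i∈S} B_i is not in I. Assume that there is no uncountable family of pairwise disjoint subsets of Y none of which belongs to I. Define J = {X ⊆ S : ⋃_{i∈X} B_i ∈ I}. Then: (1) J is a σ-ideal of subsets of S (closed under subsets and countable unions); (2) S ∉ J; and (3) there is no ω₁-indexed family (A_α : α < ω₁) of subsets of S such that A_α ∉ J for every α and A_α ∩ A_β ∈ J for all α ≠ β. -/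
open Set Cardinal

universe u

lemma sigma_ideal_biUnion' {Y : Type} {κ : Type (u+1)} (I : Set (Set Y))
    (hempty : ∅ ∈ I)
    (hsigma : ∀ f : ℕ → Set Y, (∀ n, f n ∈ I) → (⋃ n, f n) ∈ I)
    {s : Set κ} (hs : s.Countable) (g : κ → Set Y)
    (hg : ∀ i ∈ s, g i ∈ I) : (⋃ i ∈ s, g i) ∈ I := by
  rcases s.eq_empty_or_nonempty with h | h
  · simpa [h] using hempty
  · obtain ⟨f, hf⟩ := hs.exists_eq_range h
    rw [hf, Set.biUnion_range]
    exact hsigma _ (fun n => hg _ (hf ▸ Set.mem_range_self n))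

lemma sigma_ideal_union' {Y : Type} (I : Set (Set Y))
    (hsigma : ∀ f : ℕ → Set Y, (∀ n, f n ∈ I) → (⋃ n, f n) ∈ I)
    {A C : Set Y} (hA : A ∈ I) (hC : C ∈ I) : A ∪ C ∈ I := by
  have := hsigma (fun n => if n = 0 then A else C)
    (by intro n; by_cases h : n = 0 <;> simp [h, hA, hC])
  convert this using 1
  ext x
  simp only [Set.mem_union, Set.mem_iUnion]
  constructor
  · rintro (h | h)
    · exact ⟨0, by simp [h]⟩
    · exact ⟨1, by simp [h]⟩
  · rintro ⟨n, hn⟩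
    by_cases h : n = 0
    · left; simpa [h] using hn
    · right; simpa [h] using hn

lemma no_omega1_almost_disjoint {Y : Type} (I : Set (Set Y))
    (hempty : ∅ ∈ I)
    (hdown : ∀ X ∈ I, ∀ X' ⊆ X, X' ∈ I)
    (hsigma : ∀ f : ℕ → Set Y, (∀ n, f n ∈ I) → (⋃ n, f n) ∈ I)
    (hccc : ¬ ∃ 𝒜 : Set (Set Y), ¬ 𝒜.Countable ∧ (∀ A ∈ 𝒜, A ∉ I) ∧
        ∀ A₁ ∈ 𝒜, ∀ A₂ ∈ 𝒜, A₁ ≠ A₂ → A₁ ∩ A₂ = ∅)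
    (C : {α : Ordinal.{u} // α < (Cardinal.aleph 1).ord} → Set Y)
    (hCpos : ∀ α, C α ∉ I)
    (hCint : ∀ α β, α ≠ β → C α ∩ C β ∈ I) : False := by
  have hctbl : ∀ α : {α : Ordinal.{u} // α < (Cardinal.aleph 1).ord},
      ({β : {α : Ordinal.{u} // α < (Cardinal.aleph 1).ord} | β.1 < α.1}).Countable := by
    intro α
    have h1 : Countable (Set.Iio α.1) := by
      rw [← Cardinal.mk_le_aleph0_iff, Ordinal.mk_Iio_ordinal, Cardinal.lift_le_aleph0]
      have h : α.1.card < Cardinal.aleph 1 := (Cardinal.lt_ord).1 α.2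
      by_contra hc
      rw [not_le] at hc
      have h2 : Order.succ Cardinal.aleph0 ≤ α.1.card := Order.succ_le_of_lt hc
      rw [Cardinal.succ_aleph0] at h2
      exact absurd h (not_lt.2 h2)
    rw [← Set.countable_coe_iff]
    exact Function.Injective.countable
      (f := fun (β : {β : {α : Ordinal.{u} // α < (Cardinal.aleph 1).ord} | β.1 < α.1}) =>
        (⟨β.1.1, β.2⟩ : Set.Iio α.1))
      (by rintro ⟨⟨b, hb⟩, h1⟩ ⟨⟨b', hb'⟩, h2⟩ h
          simpa [Subtype.ext_iff] using congrArg Subtype.val h)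
  set D : {α : Ordinal.{u} // α < (Cardinal.aleph 1).ord} → Set Y :=
    fun α => C α \ ⋃ β ∈ {β : {α : Ordinal.{u} // α < (Cardinal.aleph 1).ord} | β.1 < α.1},
      (C α ∩ C β) with hD
  have hDpos : ∀ α, D α ∉ I := by
    intro α hmem
    have hU : (⋃ β ∈ {β : {α : Ordinal.{u} // α < (Cardinal.aleph 1).ord} | β.1 < α.1},
        (C α ∩ C β)) ∈ I := by
      refine sigma_ideal_biUnion' I hempty hsigma (hctbl α) _ ?_
      intro β hβ
      exact hCint α β (by rintro rfl; simp at hβ)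
    have : C α ∈ I := by
      refine hdown _ (sigma_ideal_union' I hsigma hmem hU) _ ?_
      intro x hx
      by_cases h : x ∈ ⋃ β ∈ {β : {α : Ordinal.{u} // α < (Cardinal.aleph 1).ord} | β.1 < α.1},
          (C α ∩ C β)
      · exact Or.inr h
      · exact Or.inl ⟨hx, h⟩
    exact hCpos α this
  have hDdisj : ∀ α β, α ≠ β → D α ∩ D β = ∅ := by
    have key : ∀ α β, β.1 < α.1 → D α ∩ D β = ∅ := by
      intro α β hlt
      ext x
      simp only [Set.mem_inter_iff, Set.mem_empty_iff_false, iff_false]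
      rintro ⟨⟨hxCα, hxN⟩, hxDβ⟩
      exact hxN (Set.mem_biUnion hlt ⟨hxCα, hxDβ.1⟩)
    intro α β hne
    rcases lt_or_gt_of_ne (fun h => hne (Subtype.ext h)) with h | h
    · rw [Set.inter_comm]; exact key β α h
    · exact key α β h
  have hDinj : Function.Injective D := by
    intro α β h
    by_contra hne
    have := hDdisj α β hne
    rw [h, Set.inter_self] at this
    exact hDpos β (this ▸ hempty)
  refine hccc ⟨Set.range D, ?_, ?_, ?_⟩
  · intro hcnt
    have h1 : Countable {α : Ordinal.{u} // α < (Cardinal.aleph 1).ord} := by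
      have e := Equiv.ofInjective D hDinj
      have : Countable (Set.range D) := hcnt.to_subtype
      exact Countable.of_equiv _ e.symm
    have h2 : Countable (Set.Iio ((Cardinal.aleph 1).ord : Ordinal.{u})) := h1
    rw [← Cardinal.mk_le_aleph0_iff, Ordinal.mk_Iio_ordinal, Cardinal.card_ord,
      Cardinal.lift_le_aleph0] at h2
    exact absurd h2 (not_le.2 Cardinal.aleph0_lt_aleph_one)
  · rintro _ ⟨α, rfl⟩
    exact hDpos α
  · rintro _ ⟨α, rfl⟩ _ ⟨β, rfl⟩ hne
    exact hDdisj α β (fun h => hne (congrArg D h))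

/-- Let `I` be a σ-ideal on `Y` and `(B i : i ∈ S)` a pairwise disjoint
family of subsets of `Y` whose union is `I`-positive. If there is no uncountable family of
pairwise disjoint `I`-positive subsets of `Y`, then the induced ideal
`J = {X ⊆ S : ⋃_{i∈X} B i ∈ I}` is a σ-ideal on `S`, `S ∉ J`, and there is no
`ω₁`-indexed family of `J`-positive subsets of `S` that are pairwise `J`-almost disjoint. -/
theorem induced_ideal_sigma_complete_aleph1_cc {Y ι : Type} (I : Set (Set Y))
    (hempty : ∅ ∈ I)
    (hdown : ∀ X ∈ I, ∀ X' ⊆ X, X' ∈ I)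
    (hsigma : ∀ f : ℕ → Set Y, (∀ n, f n ∈ I) → (⋃ n, f n) ∈ I)
    (B : ι → Set Y)
    (hdisj : ∀ i j : ι, i ≠ j → B i ∩ B j = ∅)
    (hpos : (⋃ i, B i) ∉ I)
    (hccc : ¬ ∃ 𝒜 : Set (Set Y), ¬ 𝒜.Countable ∧ (∀ A ∈ 𝒜, A ∉ I) ∧
        ∀ A₁ ∈ 𝒜, ∀ A₂ ∈ 𝒜, A₁ ≠ A₂ → A₁ ∩ A₂ = ∅)
    (J : Set (Set ι))
    (hJ : J = {X : Set ι | (⋃ i ∈ X, B i) ∈ I}) :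
    (∅ ∈ J ∧ (∀ X ∈ J, ∀ X' ⊆ X, X' ∈ J) ∧
      (∀ g : ℕ → Set ι, (∀ n, g n ∈ J) → (⋃ n, g n) ∈ J)) ∧
    (Set.univ : Set ι) ∉ J ∧
    ¬ ∃ A : {α : Ordinal // α < (Cardinal.aleph 1).ord} → Set ι,
        (∀ α, A α ∉ J) ∧ ∀ α β, α ≠ β → A α ∩ A β ∈ J := by
  subst hJ
  refine ⟨⟨by simpa using hempty, ?_, ?_⟩, ?_, ?_⟩
  · intro X hX X' hX'
    exact hdown _ hX _ (Set.biUnion_subset_biUnion_left hX')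
  · intro g hg
    have : (⋃ n, ⋃ i ∈ g n, B i) ∈ I := hsigma _ hg
    refine hdown _ this _ ?_
    intro x hx
    simp only [Set.mem_iUnion] at hx ⊢
    obtain ⟨i, ⟨n, hn⟩, hx⟩ := hx
    exact ⟨n, i, hn, hx⟩
  · simpa using hpos
  · rintro ⟨A, hApos, hAad⟩
    refine no_omega1_almost_disjoint I hempty hdown hsigma hccc
      (fun α => ⋃ i ∈ A α, B i) (fun α => hApos α) ?_
    intro α β hne
    have hsub : (⋃ i ∈ A α, B i) ∩ (⋃ i ∈ A β, B i) ⊆ ⋃ i ∈ A α ∩ A β, B i := by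
      rintro x ⟨hxα, hxβ⟩
      simp only [Set.mem_iUnion] at hxα hxβ ⊢
      obtain ⟨i, hi, hxi⟩ := hxα
      obtain ⟨j, hj, hxj⟩ := hxβ
      have hij : i = j := by
        by_contra h
        have := hdisj i j h
        exact absurd (Set.mem_inter hxi hxj) (by simp [this])
      exact ⟨i, ⟨hi, hij ▸ hj⟩, hxi⟩
    exact hdown _ (hAad α β hne) _ hsub
end

section
/- Let p* = (t*, f*) ∈ 𝔻 and let R be a maximal antichain above p* in 𝔻, with A = {tr(r) : r ∈ R} the set of trunks of members of R. Then there is no set X of finite sequences of natural numbers satisfying all of the following: t* ∈ X; every ρ ∈ X has t* as an initial segment and satisfies f*(l) ≤ ρ(l) for every l with |t*| ≤ l < |ρ|; for every ρ ∈ X there is no ν ∈ A such that t* is an initial segment of ν, f*(l) ≤ ν(l) for every l with |t*| ≤ l < |ν|, |ν| ≤ |ρ|, and ρ(l) ≤ ν(l) for every l with |t*| ≤ l < |ν|; and for every ρ ∈ X the set {k ∈ ℕ : ρ⌢⟨k⟩ ∈ X} is infinite. (This expresses that the Hechler rank rk_{p*,A}(t*) is a countable ordinal, i.e., is not ∞.)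 -/
/-- A Hechler condition: a pair `(t, f)` where the function `f : ℕ → ℕ` extends
the finite sequence `t`. -/
def HCond (p : List ℕ × (ℕ → ℕ)) : Prop :=
  ∀ i < p.1.length, p.2 i = p.1.getD i 0

/-- The Hechler order: `(t, f) ≤ (t', f')` iff `t` is an initial segment of `t'`
and `f n ≤ f' n` for all `n`. -/
def HLe (p q : List ℕ × (ℕ → ℕ)) : Prop :=
  p.1 <+: q.1 ∧ ∀ n, p.2 n ≤ q.2 n

/-- Compatibility of Hechler conditions. -/
def HCompat (p q : List ℕ × (ℕ → ℕ)) : Prop :=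
  ∃ r, HCond r ∧ HLe p r ∧ HLe q r

/-- `t` is an initial segment of the function `x : ℕ → ℕ`. -/
def PrefixOf (t : List ℕ) (x : ℕ → ℕ) : Prop :=
  ∀ i < t.length, x i = t.getD i 0

/-- `set(p)`: the reals extending the trunk of `p` and dominating its side function. -/
def HSet (p : List ℕ × (ℕ → ℕ)) : Set (ℕ → ℕ) :=
  {x | PrefixOf p.1 x ∧ ∀ n, p.2 n ≤ x n}

/-- `X` is `𝔻`-nowhere dense. -/
def HNwd (X : Set (ℕ → ℕ)) : Prop :=
  ∀ p, HCond p → ∃ q, HCond q ∧ HLe p q ∧ HSet q ∩ X = ∅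

/-- The ideal `I_{𝔻,ℵ₀}`: sets covered by countably many `𝔻`-nowhere dense sets. -/
def HIdeal (X : Set (ℕ → ℕ)) : Prop :=
  ∃ B : ℕ → Set (ℕ → ℕ), (∀ n, HNwd (B n)) ∧ X ⊆ ⋃ n, B n

/-!
Every node of `X` has a one-step extension in `X`, so there is a branch through `X` starting
at `t*`: a real `x` extending `t*` and dominating `f*`, i.e. `(t*, x)` is a condition above `p*`.
By maximality it is compatible with some `r ∈ R`, and then `x` is bounded by the trunk `ν` of `r`
on its domain; the node of the branch of length `|t*| + |ν|` contradicts the third property of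
`X` with this `ν`.
-/

theorem List.IsPrefix.getD_eq {α : Type*} {l₁ l₂ : List α} (h : l₁ <+: l₂) {i : ℕ}
    (hi : i < l₁.length) (d : α) : l₁.getD i d = l₂.getD i d := by
  rw [List.getD_eq_getElem _ _ hi, List.getD_eq_getElem _ _ (hi.trans_le h.length_le),
    h.getElem hi]

theorem List.getD_map_range {α : Type*} (x : ℕ → α) {n i : ℕ} (hi : i < n) (d : α) :
    ((List.range n).map x).getD i d = x i := by
  simp [List.getD_eq_getElem?_getD, List.getElem?_range hi]

theorem exists_branch_of_forall_append_mem {α : Type*} {X : Set (List α)} {t : List α}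
    (ht : t ∈ X) (hext : ∀ ρ ∈ X, ∃ a, ρ ++ [a] ∈ X) :
    ∃ x : ℕ → α, (List.range t.length).map x = t ∧
      ∀ n, (List.range (t.length + n)).map x ∈ X := by
  obtain ⟨a₀, -⟩ := hext t ht
  have : Inhabited α := ⟨a₀⟩
  choose! g hg using hext
  let node (n : ℕ) : List α := (fun ρ => ρ ++ [g ρ])^[n] t
  have node_succ (n : ℕ) : node (n + 1) = node n ++ [g (node n)] :=
    Function.iterate_succ_apply' _ n t
  have node_mem (n : ℕ) : node n ∈ X := by
    induction n with
    | zero => exact ht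
    | succ n ih => rw [node_succ]; exact hg _ ih
  let x (l : ℕ) : α := if h : l < t.length then t[l] else g (node (l - t.length))
  have map_x (n : ℕ) : (List.range (t.length + n)).map x = node n := by
    induction n with
    | zero =>
      refine List.ext_getElem (by simp [node]) fun i hi _ => ?_
      simp only [Nat.add_zero, List.length_map, List.length_range] at hi
      simp [x, node, hi]
    | succ n ih => rw [← add_assoc, List.range_succ, List.map_append, ih, node_succ]; simp [x]
  exact ⟨x, map_x 0, fun n => map_x n ▸ node_mem n⟩

theorem HLe.le_getD_trunk {p r : List ℕ × (ℕ → ℕ)} (h : HLe p r) (hr : HCond r) {l : ℕ}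
    (hl : l < r.1.length) : p.2 l ≤ r.1.getD l 0 :=
  (h.2 l).trans_eq (hr l hl)

theorem HCompat.le_getD_trunk {p r : List ℕ × (ℕ → ℕ)} (h : HCompat p r) {l : ℕ}
    (hl : l < r.1.length) : p.2 l ≤ r.1.getD l 0 := by
  obtain ⟨s, hs, hps, hrs⟩ := h
  rw [hrs.1.getD_eq hl]
  exact hps.le_getD_trunk hs (hl.trans_le hrs.1.length_le)

theorem exists_branch_cond_above {t : List ℕ} {f : ℕ → ℕ} (hp : HCond (t, f))
    {X : Set (List ℕ)} (htX : t ∈ X)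
    (hXdom : ∀ ρ ∈ X, ∀ l, t.length ≤ l → l < ρ.length → f l ≤ ρ.getD l 0)
    (hXext : ∀ ρ ∈ X, ∃ k, ρ ++ [k] ∈ X) :
    ∃ x : ℕ → ℕ, HCond (t, x) ∧ HLe (t, f) (t, x) ∧
      ∀ n, (List.range (t.length + n)).map x ∈ X := by
  obtain ⟨x, hxt, hxX⟩ := exists_branch_of_forall_append_mem htX hXext
  have hcond : HCond (t, x) := fun i hi => by
    simpa [hxt] using (List.getD_map_range x hi 0).symm
  refine ⟨x, hcond, ⟨List.prefix_refl t, fun n => ?_⟩, hxX⟩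
  rcases lt_or_ge n t.length with hn | hn
  · exact (hp n hn).trans_le (hcond n hn).ge
  · have hdom := hXdom _ (hxX (n + 1 - t.length)) n hn
      (by simp only [List.length_map, List.length_range]; omega)
    rwa [List.getD_map_range x (by omega)] at hdom

theorem hechler_rank_lt_omega_one_general
    (tstar : List ℕ) (fstar : ℕ → ℕ) (hp : HCond (tstar, fstar))
    (R : Set (List ℕ × (ℕ → ℕ)))
    (hRcond : ∀ r ∈ R, HCond r)
    (hRabove : ∀ r ∈ R, HLe (tstar, fstar) r)
    (hRmax : ∀ q, HCond q → HLe (tstar, fstar) q → ∃ r ∈ R, HCompat q r) :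
    ¬ ∃ X : Set (List ℕ),
        tstar ∈ X ∧
        (∀ ρ ∈ X, tstar <+: ρ ∧
          ∀ l, tstar.length ≤ l → l < ρ.length → fstar l ≤ ρ.getD l 0) ∧
        (∀ ρ ∈ X, ¬ ∃ ν : List ℕ, (∃ r ∈ R, r.1 = ν) ∧ tstar <+: ν ∧
            (∀ l, tstar.length ≤ l → l < ν.length → fstar l ≤ ν.getD l 0) ∧
            ν.length ≤ ρ.length ∧
            (∀ l, tstar.length ≤ l → l < ν.length → ρ.getD l 0 ≤ ν.getD l 0)) ∧
        (∀ ρ ∈ X, {k : ℕ | ρ ++ [k] ∈ X}.Infinite) := by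
  rintro ⟨X, htX, hXdom, hXavoid, hXinf⟩
  obtain ⟨x, hxcond, hxle, hxX⟩ :=
    exists_branch_cond_above hp htX (fun ρ hρ => (hXdom ρ hρ).2)
      fun ρ hρ => (hXinf ρ hρ).nonempty
  obtain ⟨r, hr, hcompat⟩ := hRmax _ hxcond hxle
  refine hXavoid _ (hxX r.1.length) ⟨r.1, ⟨r, hr, rfl⟩, (hRabove r hr).1,
    fun l _ hl => (hRabove r hr).le_getD_trunk (hRcond r hr) hl, by simp, fun l _ hl => ?_⟩
  rw [List.getD_map_range x (by omega)]
  exact hcompat.le_getD_trunk hl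

/-- If `R` is a maximal antichain above `p* = (t*, f*)` in Hechler
forcing, with `A` the set of trunks of members of `R`, then the rank `rk_{p*,A}(t*)`
is not `∞`: there is no set `X` of finite sequences witnessing rank `≥ ω₁` at `t*`. -/
theorem hechler_rank_lt_omega_one
    (tstar : List ℕ) (fstar : ℕ → ℕ) (hp : HCond (tstar, fstar))
    (R : Set (List ℕ × (ℕ → ℕ)))
    (hRcond : ∀ r ∈ R, HCond r)
    (hRabove : ∀ r ∈ R, HLe (tstar, fstar) r)
    (hRanti : ∀ r ∈ R, ∀ r' ∈ R, r ≠ r' → ¬ HCompat r r')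
    (hRmax : ∀ q, HCond q → HLe (tstar, fstar) q → ∃ r ∈ R, HCompat q r) :
    ¬ ∃ X : Set (List ℕ),
        tstar ∈ X ∧
        (∀ ρ ∈ X, tstar <+: ρ ∧
          ∀ l, tstar.length ≤ l → l < ρ.length → fstar l ≤ ρ.getD l 0) ∧
        (∀ ρ ∈ X, ¬ ∃ ν : List ℕ, (∃ r ∈ R, r.1 = ν) ∧ tstar <+: ν ∧
            (∀ l, tstar.length ≤ l → l < ν.length → fstar l ≤ ν.getD l 0) ∧
            ν.length ≤ ρ.length ∧
            (∀ l, tstar.length ≤ l → l < ν.length → ρ.getD l 0 ≤ ν.getD l 0)) ∧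
        (∀ ρ ∈ X, {k : ℕ | ρ ++ [k] ∈ X}.Infinite) :=
  hechler_rank_lt_omega_one_general tstar fstar hp R hRcond hRabove hRmax
end

section
/- Let ε be a countable ordinal and (Λ, h) ∈ Y_ε. Then for every Hechler condition (ν, f) ∈ 𝔻 there exists η ∈ Ω_Λ⁺ such that the condition (η, η⌢0^ω) is compatible with (ν, f); that is, I_Λ meets every condition of 𝔻 compatibly (together with being an antichain, I_Λ is a maximal antichain in 𝔻). -/
/-- The tree conditions (i)-(iii) on `Λ` from the definition of `Y_ε`. -/
def LamTree (Λ : Set (List ℕ)) : Prop :=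
  Λ.Nonempty ∧
  (∀ ρ ∈ Λ, ∀ σ : List ℕ, σ <+: ρ → σ ∈ Λ) ∧
  (∀ ρ ∈ Λ, (∀ k : ℕ, ρ ++ [k] ∈ Λ) ∨ (∀ k : ℕ, ρ ++ [k] ∉ Λ)) ∧
  (∀ ν₁ ν₂ : List ℕ, ν₁.length = ν₂.length → ν₁ ∈ Λ →
      (∀ l, ν₁.getD l 0 ≤ ν₂.getD l 0) → ν₂ ∈ Λ) ∧
  ¬ ∃ x : ℕ → ℕ, ∀ n : ℕ, (List.ofFn fun i : Fin n => x i) ∈ Λ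

/-- The conditions on the rank function `h : Λ → ε + 1` from the definition of `Y_ε`. -/
def LamRank (ε : Ordinal) (Λ : Set (List ℕ)) (h : List ℕ → Ordinal) : Prop :=
  (∀ ρ ∈ Λ, h ρ ≤ ε) ∧
  h [] = ε ∧
  (∀ ρ₁ ∈ Λ, ∀ ρ₂ ∈ Λ, ρ₁ <+: ρ₂ → ρ₁ ≠ ρ₂ → h ρ₂ < h ρ₁) ∧
  (∀ ρ ∈ Λ, ∀ ζ : Ordinal, h ρ = ζ + 1 → ∀ k : ℕ, ρ ++ [k] ∈ Λ → h (ρ ++ [k]) = ζ) ∧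
  (∀ ρ ∈ Λ, Order.IsSuccLimit (h ρ) →
      ∀ β < h ρ, ∃ K : ℕ, ∀ k ≥ K, ρ ++ [k] ∈ Λ → β ≤ h (ρ ++ [k]))

/-- `(Λ, h) ∈ Y_ε`. -/
def MemY (ε : Ordinal) (Λ : Set (List ℕ)) (h : List ℕ → Ordinal) : Prop :=
  LamTree Λ ∧ LamRank ε Λ h

/-- `max(Λ)`: the elements of `Λ` with no proper extension in `Λ`. -/
def maxLam (Λ : Set (List ℕ)) : Set (List ℕ) :=
  {ρ ∈ Λ | ∀ σ ∈ Λ, ρ <+: σ → σ = ρ}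

/-- `Ω_M`: sequences of the form `η₀⌢⟨2n₀+1⟩⌢η₁⌢⟨2n₁+1⟩⌢⋯⌢η_k` with all `ηᵢ ∈ M`. -/
inductive InOmega (M : Set (List ℕ)) : List ℕ → Prop
  | base : ∀ η ∈ M, InOmega M η
  | step : ∀ ν, InOmega M ν → ∀ (n : ℕ), ∀ η ∈ M, InOmega M (ν ++ (2 * n + 1) :: η)

/-- `Ω_M⁺ = {ν⌢⟨2n⟩ : ν ∈ Ω_M, n ∈ ℕ}`. -/
def OmegaPlus (M : Set (List ℕ)) : Set (List ℕ) :=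
  {ρ | ∃ ν, InOmega M ν ∧ ∃ n : ℕ, ρ = ν ++ [2 * n]}

/-- `B_Λ`: the reals having no initial segment in `Ω_{max Λ}⁺`. -/
def BLam (Λ : Set (List ℕ)) : Set (ℕ → ℕ) :=
  {x | ∀ η ∈ OmegaPlus (maxLam Λ), ¬ PrefixOf η x}

/-!
Follow the branch `f`. Since `Λ` has no infinite branch and its nodes have either all or no
children, every real has an initial segment in `max Λ`. Hence `f` starts as
`η₀⌢⟨f k₀⟩⌢η₁⌢⟨f k₁⟩⌢⋯` with `ηᵢ ∈ max Λ`, so that `f ↾ kᵢ ∈ Ω_Λ`, and this decomposition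
continues as long as the separators `f kᵢ` are odd. Take the first separator `f k` that is even
or lies beyond the trunk `ν`. If it is even and inside `ν`, then `f ↾ (k + 1)` is
in `Ω_Λ⁺` and is an initial segment of `ν`. Otherwise `ν` is an initial segment of `f ↾ k`, and
`f ↾ k ⌢ ⟨2 f k⟩ ∈ Ω_Λ⁺` works, since its last entry dominates `f k`.
-/

def initSeg {α : Type*} (x : ℕ → α) (n : ℕ) : List α := List.ofFn fun i : Fin n => x i

section initSeg

variable {α : Type*}

@[simp]
lemma length_initSeg (x : ℕ → α) (n : ℕ) : (initSeg x n).length = n := by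
  simp [initSeg]

lemma getD_initSeg (x : ℕ → α) {n i : ℕ} (hi : i < n) (d : α) : (initSeg x n).getD i d = x i := by
  simp [initSeg, hi]

lemma initSeg_add (x : ℕ → α) (m n : ℕ) :
    initSeg x (m + n) = initSeg x m ++ initSeg (fun i => x (m + i)) n :=
  List.ofFn_add

lemma initSeg_succ (x : ℕ → α) (n : ℕ) : initSeg x (n + 1) = initSeg x n ++ [x n] := by
  rw [initSeg, initSeg, List.ofFn_succ', List.concat_eq_append]
  rfl

lemma initSeg_prefix_initSeg (x : ℕ → α) {m n : ℕ} (h : m ≤ n) : initSeg x m <+: initSeg x n := by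
  obtain ⟨k, rfl⟩ := Nat.exists_eq_add_of_le h
  exact ⟨_, (initSeg_add x m k).symm⟩

end initSeg

lemma initSeg_eq_of_hCond {ν : List ℕ} {f : ℕ → ℕ} (hc : HCond (ν, f)) : initSeg f ν.length = ν :=
  List.ext_getElem (by simp) fun i _ hi => by
    simpa only [initSeg, List.getElem_ofFn] using (hc i hi).trans (List.getD_eq_getElem _ _ hi)

section Hechler

variable {ν η : List ℕ} {f : ℕ → ℕ}

lemma hCompat_of_prefix_of_hCond (hc : HCond (ν, f)) (hην : η <+: ν) :
    HCompat (η, fun n => η.getD n 0) (ν, f) := by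
  refine ⟨(ν, f), hc, ⟨hην, fun i => ?_⟩, ⟨List.prefix_refl ν, fun _ => le_rfl⟩⟩
  dsimp only
  by_cases hi : i < η.length
  · have hiν : i < ν.length := lt_of_lt_of_le hi hην.length_le
    rw [show f i = ν.getD i 0 from hc i hiν, List.getD_eq_getElem _ _ hi,
      List.getD_eq_getElem _ _ hiν, hην.getElem hi]
  · rw [List.getD_eq_default _ _ (not_lt.mp hi)]
    exact Nat.zero_le _

lemma hCompat_of_prefix_of_le (hνη : ν <+: η) (hf : ∀ i < η.length, f i ≤ η.getD i 0) :
    HCompat (η, fun n => η.getD n 0) (ν, f) :=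
  ⟨(η, fun i => max (η.getD i 0) (f i)), fun i hi => max_eq_left (hf i hi),
    ⟨List.prefix_refl η, fun _ => le_max_left _ _⟩, ⟨hνη, fun _ => le_max_right _ _⟩⟩

end Hechler

section Tree

variable {Λ : Set (List ℕ)}

lemma mem_maxLam_of_append_singleton_not_mem (hpre : ∀ ρ ∈ Λ, ∀ σ : List ℕ, σ <+: ρ → σ ∈ Λ)
    (hchild : ∀ ρ ∈ Λ, (∀ k : ℕ, ρ ++ [k] ∈ Λ) ∨ (∀ k : ℕ, ρ ++ [k] ∉ Λ))
    {ρ : List ℕ} (hρ : ρ ∈ Λ) {k : ℕ} (hk : ρ ++ [k] ∉ Λ) : ρ ∈ maxLam Λ := by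
  refine ⟨hρ, fun σ hσ ⟨u, hu⟩ => ?_⟩
  subst hu
  cases u with
  | nil => simp
  | cons c u =>
    have hc : ρ ++ [c] ∈ Λ := hpre _ hσ _ ⟨u, by simp⟩
    exact ((hchild ρ hρ).resolve_left fun hall => hk (hall k)) c hc |>.elim

lemma exists_initSeg_mem_maxLam (hnil : [] ∈ Λ) (hpre : ∀ ρ ∈ Λ, ∀ σ : List ℕ, σ <+: ρ → σ ∈ Λ)
    (hchild : ∀ ρ ∈ Λ, (∀ k : ℕ, ρ ++ [k] ∈ Λ) ∨ (∀ k : ℕ, ρ ++ [k] ∉ Λ))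
    (hwf : ¬ ∃ x : ℕ → ℕ, ∀ n, initSeg x n ∈ Λ) (x : ℕ → ℕ) :
    ∃ t, initSeg x t ∈ maxLam Λ := by
  classical
  have hexit : ∃ n, initSeg x n ∉ Λ := by
    by_contra! hall
    exact hwf ⟨x, hall⟩
  obtain ⟨t, ht⟩ : ∃ t, Nat.find hexit = t + 1 :=
    Nat.exists_eq_succ_of_ne_zero fun h0 => by
      have hout := Nat.find_spec hexit
      rw [h0] at hout
      exact hout (by simpa [initSeg] using hnil)
  have hmem : initSeg x t ∈ Λ := not_not.mp (Nat.find_min hexit (by omega))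
  have hout : initSeg x t ++ [x t] ∉ Λ := by
    have hout := Nat.find_spec hexit
    rwa [ht, initSeg_succ] at hout
  exact ⟨t, mem_maxLam_of_append_singleton_not_mem hpre hchild hmem hout⟩

end Tree

section Omega

variable {M : Set (List ℕ)} {f : ℕ → ℕ}

lemma exists_gt_inOmega_initSeg (hM : ∀ x : ℕ → ℕ, ∃ t, initSeg x t ∈ M) {k : ℕ}
    (hk : InOmega M (initSeg f k)) (hodd : Odd (f k)) : ∃ k' > k, InOmega M (initSeg f k') := by
  obtain ⟨n, hn⟩ := hodd
  obtain ⟨t, ht⟩ := hM fun i => f (k + 1 + i)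
  refine ⟨k + 1 + t, by omega, ?_⟩
  have hsplit : initSeg f (k + 1 + t) =
      initSeg f k ++ (2 * n + 1) :: initSeg (fun i => f (k + 1 + i)) t := by
    simp [initSeg_add, initSeg_succ, hn]
  rw [hsplit]
  exact hk.step _ n _ ht

lemma exists_inOmega_initSeg_le_or_even (hM : ∀ x : ℕ → ℕ, ∃ t, initSeg x t ∈ M) (N : ℕ) :
    ∃ k, InOmega M (initSeg f k) ∧ (N ≤ k ∨ Even (f k)) := by
  induction N with
  | zero =>
    obtain ⟨t, ht⟩ := hM f
    exact ⟨t, .base _ ht, .inl (Nat.zero_le t)⟩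
  | succ N ih =>
    obtain ⟨k, hk, hNk | heven⟩ := ih
    · rcases hNk.eq_or_lt with rfl | hlt
      · rcases Nat.even_or_odd (f N) with heven | hodd
        · exact ⟨N, hk, .inr heven⟩
        · obtain ⟨k', hk'N, hk'⟩ := exists_gt_inOmega_initSeg hM hk hodd
          exact ⟨k', hk', .inl hk'N⟩
      · exact ⟨k, hk, .inl hlt⟩
    · exact ⟨k, hk, .inr heven⟩

end Omega

section OmegaPlus

variable {M : Set (List ℕ)} {ν : List ℕ} {f : ℕ → ℕ} {k : ℕ}

lemma exists_omegaPlus_hCompat_of_even (hc : HCond (ν, f)) (hk : InOmega M (initSeg f k))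
    (hkν : k < ν.length) (heven : Even (f k)) :
    ∃ η ∈ OmegaPlus M, HCompat (η, fun n => η.getD n 0) (ν, f) := by
  obtain ⟨n, hn⟩ := heven
  refine ⟨initSeg f (k + 1), ⟨_, hk, n, by rw [initSeg_succ, hn, two_mul]⟩, ?_⟩
  apply hCompat_of_prefix_of_hCond hc
  simpa [initSeg_eq_of_hCond hc] using initSeg_prefix_initSeg f hkν

lemma exists_omegaPlus_hCompat_of_length_le (hc : HCond (ν, f)) (hk : InOmega M (initSeg f k))
    (hνk : ν.length ≤ k) :
    ∃ η ∈ OmegaPlus M, HCompat (η, fun n => η.getD n 0) (ν, f) := by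
  refine ⟨initSeg f k ++ [2 * f k], ⟨_, hk, f k, rfl⟩, hCompat_of_prefix_of_le ?_ fun i hi => ?_⟩
  · rw [← initSeg_eq_of_hCond hc]
    exact (initSeg_prefix_initSeg f hνk).trans (List.prefix_append _ _)
  · simp only [List.length_append, length_initSeg, List.length_singleton] at hi
    rcases Nat.lt_succ_iff_lt_or_eq.mp hi with hik | rfl
    · rw [List.getD_append _ _ _ _ (by simpa), getD_initSeg f hik]
    · rw [List.getD_append_right _ _ _ _ (by simp), length_initSeg, Nat.sub_self,
        List.getD_cons_zero]
      omega

end OmegaPlus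

theorem ILam_is_maximal_antichain_general
    (ε : Ordinal)
    (Λ : Set (List ℕ)) (h : List ℕ → Ordinal) (hY : MemY ε Λ h)
    (ν : List ℕ) (f : ℕ → ℕ) (hc : HCond (ν, f)) :
    ∃ η ∈ OmegaPlus (maxLam Λ),
      HCompat (η, fun n => η.getD n 0) (ν, f) := by
  obtain ⟨⟨⟨ρ, hρ⟩, hpre, hchild, -, hwf⟩, -⟩ := hY
  have hM := exists_initSeg_mem_maxLam (hpre ρ hρ [] List.nil_prefix) hpre hchild hwf
  obtain ⟨k, hk, hstop⟩ := exists_inOmega_initSeg_le_or_even (f := f) hM ν.length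
  rcases le_or_gt ν.length k with hνk | hkν
  · exact exists_omegaPlus_hCompat_of_length_le hc hk hνk
  · exact exists_omegaPlus_hCompat_of_even hc hk hkν (hstop.resolve_left hkν.not_ge)

/-- For `(Λ, h) ∈ Y_ε`, every Hechler condition `(ν, f)` is compatible
with some condition `(η, η⌢0^ω)` with `η ∈ Ω_Λ⁺`; i.e. the antichain `I_Λ` is maximal. -/
theorem ILam_is_maximal_antichain
    (ε : Ordinal) (hε : ε < (Cardinal.aleph 1).ord)
    (Λ : Set (List ℕ)) (h : List ℕ → Ordinal) (hY : MemY ε Λ h)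
    (ν : List ℕ) (f : ℕ → ℕ) (hc : HCond (ν, f)) :
    ∃ η ∈ OmegaPlus (maxLam Λ),
      HCompat (η, fun n => η.getD n 0) (ν, f) :=
  ILam_is_maximal_antichain_general ε Λ h hY ν f hc
end

section
/- Let ε be a countable ordinal and (Λ, h) ∈ Y_ε. Then the set B_Λ = {x : ℕ → ℕ | no η ∈ Ω_Λ⁺ is an initial segment of x} is 𝔻-nowhere dense: for every p ∈ 𝔻 there exists q ∈ 𝔻 with p ≤ q and set(q) ∩ B_Λ = ∅. In particular B_Λ ∈ I_{𝔻,ℵ₀}. -/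
/-
Work below a Hechler condition `(t, f)`. If some initial segment of `t` lies in `Ω⁺`, then `(t, f)`
itself forces the generic real out of `B_Λ`. Otherwise `t` parses as a word of `Ω` followed by an
unfinished block `τ ∈ Λ`. Since `Λ` is well founded (it carries the rank `h`) and every
non-maximal node has all one-point extensions, `τ` can be prolonged to a maximal node by digits
dominating `f`; appending one more even digit above `f` then gives a trunk in `Ω⁺` that is still
compatible with `f`.
-/

lemma PrefixOf.of_prefix {u t : List ℕ} {x : ℕ → ℕ} (hut : u <+: t) (hx : PrefixOf t x) :
    PrefixOf u x := by
  obtain ⟨v, rfl⟩ := hut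
  intro i hi
  rw [hx i (by simp only [List.length_append]; omega), List.getD_append _ _ _ _ hi]

lemma HCond.exists_le_trunk_append {t s : List ℕ} {f : ℕ → ℕ} (hp : HCond (t, f))
    (hs : ∀ j < s.length, f (t.length + j) ≤ s.getD j 0) :
    ∃ q, HCond q ∧ HLe (t, f) q ∧ q.1 = t ++ s := by
  have hle : ∀ i < (t ++ s).length, f i ≤ (t ++ s).getD i 0 := by
    intro i hi
    rcases lt_or_ge i t.length with hit | hti
    · rw [List.getD_append _ _ _ _ hit, ← hp i hit]
    · obtain ⟨j, rfl⟩ := Nat.exists_eq_add_of_le hti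
      rw [List.getD_append_right _ _ _ _ hti, Nat.add_sub_cancel_left]
      exact hs j (by simpa using hi)
  exact ⟨(t ++ s, fun n => max (f n) ((t ++ s).getD n 0)),
    fun i hi => max_eq_right (hle i hi), ⟨List.prefix_append _ _, fun _ => le_max_left _ _⟩, rfl⟩

lemma HSet_inter_eq_empty_of_prefix {X : Set (ℕ → ℕ)} {q : List ℕ × (ℕ → ℕ)} {u : List ℕ}
    (hu : u <+: q.1) (hX : ∀ x ∈ X, ¬ PrefixOf u x) : HSet q ∩ X = ∅ :=
  Set.eq_empty_of_forall_notMem fun _ ⟨hxq, hxX⟩ => hX _ hxX (hxq.1.of_prefix hu)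

lemma HNwd.hIdeal {X : Set (ℕ → ℕ)} (hX : HNwd X) : HIdeal X :=
  ⟨fun _ => X, fun _ => hX, Set.subset_iUnion (fun _ : ℕ => X) 0⟩

namespace LamTree

variable {Λ : Set (List ℕ)} (hΛ : LamTree Λ)
include hΛ

lemma nil_mem : ([] : List ℕ) ∈ Λ := by
  obtain ⟨ρ, hρ⟩ := hΛ.1
  exact hΛ.2.1 ρ hρ [] List.nil_prefix

lemma append_singleton_mem {ρ : List ℕ} (hρ : ρ ∈ Λ) (hmax : ρ ∉ maxLam Λ) (k : ℕ) :
    ρ ++ [k] ∈ Λ := by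
  obtain ⟨σ, hσ, ⟨u, rfl⟩, hne⟩ : ∃ σ ∈ Λ, ρ <+: σ ∧ σ ≠ ρ := by
    by_contra! hcon
    exact hmax ⟨hρ, hcon⟩
  obtain ⟨a, u, rfl⟩ := List.exists_cons_of_ne_nil (show u ≠ [] by rintro rfl; simp at hne)
  have ha : ρ ++ [a] ∈ Λ := hΛ.2.1 _ hσ _ ⟨u, by simp⟩
  exact (hΛ.2.2.1 ρ hρ).resolve_right (fun hnone => hnone a ha) k

lemma exists_append_mem_maxLam {ε : Ordinal} {h : List ℕ → Ordinal} (hh : LamRank ε Λ h)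
    {τ : List ℕ} (hτ : τ ∈ Λ) (g : ℕ → ℕ) :
    ∃ s, τ ++ s ∈ maxLam Λ ∧ ∀ j < s.length, g j ≤ s.getD j 0 := by
  induction hτo : h τ using WellFoundedLT.induction generalizing τ g with
  | _ o IH =>
    by_cases hmax : τ ∈ maxLam Λ
    · exact ⟨[], by simpa using hmax, by simp⟩
    have hτ' := hΛ.append_singleton_mem hτ hmax (g 0)
    have hlt : h (τ ++ [g 0]) < o := hτo ▸ hh.2.2.1 τ hτ _ hτ' ⟨[g 0], rfl⟩ (by simp)
    obtain ⟨s, hs, hgs⟩ := IH _ hlt hτ' (fun j => g (j + 1)) rfl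
    refine ⟨g 0 :: s, by simpa using hs, ?_⟩
    rintro (_ | j) hj
    · simp
    · simpa using hgs j (by simpa using hj)

lemma exists_block_of_forall_prefix_notMem_omegaPlus {t : List ℕ}
    (ht : ∀ u, u <+: t → u ∉ OmegaPlus (maxLam Λ)) :
    ∃ τ ∈ Λ, ∀ η, τ ++ η ∈ maxLam Λ → InOmega (maxLam Λ) (t ++ η) := by
  induction t using List.reverseRecOn with
  | nil => exact ⟨[], hΛ.nil_mem, fun η hη => InOmega.base η (by simpa using hη)⟩
  | append_singleton t c IH =>
    obtain ⟨τ, hτ, hτΩ⟩ := IH fun u hu => ht u (hu.trans (List.prefix_append _ _))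
    by_cases hmax : τ ∈ maxLam Λ
    · have htΩ : InOmega (maxLam Λ) t := by simpa using hτΩ [] (by simpa using hmax)
      obtain ⟨m, rfl⟩ : ∃ m, c = 2 * m + 1 := by
        rcases Nat.even_or_odd' c with ⟨m, rfl | rfl⟩
        · exact absurd ⟨t, htΩ, m, rfl⟩ (ht _ (List.prefix_refl _))
        · exact ⟨m, rfl⟩
      exact ⟨[], hΛ.nil_mem, fun η hη => by
        simpa using InOmega.step t htΩ m η (by simpa using hη)⟩
    · exact ⟨τ ++ [c], hΛ.append_singleton_mem hτ hmax c, fun η hη => by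
        simpa using hτΩ ([c] ++ η) (by simpa using hη)⟩

lemma exists_append_mem_omegaPlus {ε : Ordinal} {h : List ℕ → Ordinal} (hh : LamRank ε Λ h)
    {t : List ℕ} (ht : ∀ u, u <+: t → u ∉ OmegaPlus (maxLam Λ)) (g : ℕ → ℕ) :
    ∃ s, t ++ s ∈ OmegaPlus (maxLam Λ) ∧ ∀ j < s.length, g j ≤ s.getD j 0 := by
  obtain ⟨τ, hτ, hτΩ⟩ := hΛ.exists_block_of_forall_prefix_notMem_omegaPlus ht
  obtain ⟨η, hη, hgη⟩ := hΛ.exists_append_mem_maxLam hh hτ g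
  refine ⟨η ++ [2 * g η.length], ⟨t ++ η, hτΩ η hη, g η.length, by simp⟩, ?_⟩
  intro j hj
  rcases lt_or_ge j η.length with hjη | hηj
  · rw [List.getD_append _ _ _ _ hjη]
    exact hgη j hjη
  · obtain rfl : j = η.length := by simp only [List.length_append, List.length_singleton] at hj; omega
    simpa using Nat.le_mul_of_pos_left _ two_pos

end LamTree

theorem BLam_nowhere_dense_general
    (ε : Ordinal)
    (Λ : Set (List ℕ)) (h : List ℕ → Ordinal) (hY : MemY ε Λ h) :
    HNwd (BLam Λ) ∧ HIdeal (BLam Λ) := by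
  obtain ⟨hΛ, hh⟩ := hY
  have hnwd : HNwd (BLam Λ) := by
    rintro ⟨t, f⟩ hp
    by_cases hΩ : ∃ u, u <+: t ∧ u ∈ OmegaPlus (maxLam Λ)
    · obtain ⟨u, hut, huΩ⟩ := hΩ
      exact ⟨(t, f), hp, ⟨List.prefix_refl _, fun _ => le_rfl⟩,
        HSet_inter_eq_empty_of_prefix hut fun x hx => hx u huΩ⟩
    · push Not at hΩ
      obtain ⟨s, hsΩ, hfs⟩ :=
        hΛ.exists_append_mem_omegaPlus hh hΩ (fun j => f (t.length + j))
      obtain ⟨q, hq, hpq, hq₁⟩ := hp.exists_le_trunk_append hfs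
      exact ⟨q, hq, hpq,
        HSet_inter_eq_empty_of_prefix (hq₁ ▸ List.prefix_refl _) fun x hx => hx _ hsΩ⟩
  exact ⟨hnwd, hnwd.hIdeal⟩

/-- For `(Λ, h) ∈ Y_ε`, the set `B_Λ` of reals having no initial
segment in `Ω_Λ⁺` is `𝔻`-nowhere dense; in particular `B_Λ ∈ I_{𝔻,ℵ₀}`. -/
theorem BLam_nowhere_dense
    (ε : Ordinal) (hε : ε < (Cardinal.aleph 1).ord)
    (Λ : Set (List ℕ)) (h : List ℕ → Ordinal) (hY : MemY ε Λ h) :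
    HNwd (BLam Λ) ∧ HIdeal (BLam Λ) :=
  BLam_nowhere_dense_general ε Λ h hY
end

section
/- Let M be a set of finite sequences of natural numbers that are pairwise incomparable under the initial-segment relation (no element of M is a proper initial segment of another), let Ω_M be the set of finite sequences of the form η₀⌢⟨2n₀+1⟩⌢η₁⌢⟨2n₁+1⟩⌢⋯⌢⟨2n_{k−1}+1⟩⌢η_k with k ∈ ℕ, n₀,…,n_{k−1} ∈ ℕ and η₀,…,η_k ∈ M, and let Ω_M⁺ = {ν⌢⟨2n⟩ : ν ∈ Ω_M, n ∈ ℕ}. Then no element of Ω_M⁺ is a proper initial segment of another element of Ω_M⁺. Consequently, for any such M, the Hechler conditions (η, η⌢0^ω) for distinct η ∈ Ω_M⁺ are pairwise incompatible, i.e., {(η, η⌢0^ω) : η ∈ Ω_M⁺} is an antichain in 𝔻. -/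
/-!
Since `M` is prefix-free and every separator `2n+1` is odd, an element of `Ω_M` can be parsed
from the left in only one way: if `a ⊑ b` in `Ω_M` and `a ≠ b`, then after `a` the sequence `b`
continues with an odd separator. An element `a⌢⟨2m⟩` of `Ω_M⁺` that is a proper initial segment
of `b⌢⟨2n⟩` would force `a⌢⟨2m⟩ ⊑ b`, so `b` would continue after `a` with the even entry `2m`.
Two Hechler conditions are compatible only if their trunks are comparable, which gives the
antichain.
-/

def PrefixFree {α : Type*} (S : Set (List α)) : Prop :=
  ∀ a ∈ S, ∀ b ∈ S, a <+: b → a = b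

theorem PrefixFree.eq_of_prefix_of_prefix {α : Type*} {S : Set (List α)} (hS : PrefixFree S)
    {a b l : List α} (ha : a ∈ S) (hb : b ∈ S) (hal : a <+: l) (hbl : b <+: l) : a = b := by
  rcases List.prefix_or_prefix_of_prefix hal hbl with h | h
  · exact hS a ha b hb h
  · exact (hS b hb a ha h).symm

namespace InOmega

variable {M : Set (List ℕ)}

theorem mem_or_exists_append_cons {a : List ℕ} (ha : InOmega M a) :
    a ∈ M ∨ ∃ η ∈ M, ∃ k a', InOmega M a' ∧ a = η ++ (2 * k + 1) :: a' := by
  induction ha with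
  | base η hη => exact .inl hη
  | step ν _ n η hη ih =>
    rcases ih with hν | ⟨η₀, hη₀, k, a', ha', rfl⟩
    · exact .inr ⟨ν, hν, n, η, .base η hη, rfl⟩
    · exact .inr ⟨η₀, hη₀, k, a' ++ (2 * n + 1) :: η, .step a' ha' n η hη, by simp⟩

theorem eq_or_append_odd_prefix (hM : PrefixFree M) {a b : List ℕ} (ha : InOmega M a)
    (hb : InOmega M b) (hab : a <+: b) : a = b ∨ ∃ k, a ++ [2 * k + 1] <+: b := by
  induction hn : a.length using Nat.strong_induction_on generalizing a b with
  | _ n ih =>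
    rcases ha.mem_or_exists_append_cons with haM | ⟨η, hη, k, a', ha', rfl⟩ <;>
      rcases hb.mem_or_exists_append_cons with hbM | ⟨θ, hθ, j, b', hb', rfl⟩
    · exact .inl (hM a haM b hbM hab)
    · obtain rfl : a = θ := hM.eq_of_prefix_of_prefix haM hθ hab (List.prefix_append _ _)
      exact .inr ⟨j, by simp⟩
    · obtain rfl : η = b :=
        hM.eq_of_prefix_of_prefix hη hbM ((List.prefix_append _ _).trans hab) (List.prefix_refl _)
      simpa using hab.length_le
    · obtain rfl : η = θ := hM.eq_of_prefix_of_prefix hη hθ ((List.prefix_append _ _).trans hab)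
        (List.prefix_append _ _)
      obtain ⟨hkj, htail⟩ := List.cons_prefix_cons.mp ((List.prefix_append_right_inj η).mp hab)
      obtain rfl : k = j := by omega
      have hlt : a'.length < n := by rw [← hn, List.length_append, List.length_cons]; omega
      rcases ih a'.length hlt ha' hb' htail rfl with rfl | ⟨i, hi⟩
      · exact .inl rfl
      · exact .inr ⟨i, by simpa using hi⟩

end InOmega

theorem OmegaPlus.prefixFree {M : Set (List ℕ)} (hM : PrefixFree M) :
    PrefixFree (OmegaPlus M) := by
  rintro _ ⟨a, ha, m, rfl⟩ _ ⟨b, hb, n, rfl⟩ hab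
  by_contra hne
  have hlt : (a ++ [2 * m]).length < (b ++ [2 * n]).length :=
    lt_of_le_of_ne hab.length_le fun h => hne (hab.eq_of_length h)
  have hab' : a ++ [2 * m] <+: b :=
    List.prefix_of_prefix_length_le hab (List.prefix_append _ _) <| by
      simp only [List.length_append, List.length_singleton] at hlt ⊢; omega
  rcases ha.eq_or_append_odd_prefix hM hb ((List.prefix_append _ _).trans hab') with
    rfl | ⟨k, hk⟩
  · simpa using hab'.length_le
  · have hparity : 2 * m = 2 * k + 1 := by
      simpa using List.prefix_of_prefix_length_le hab' hk (by simp)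
    omega

theorem HCompat.prefix_or_prefix {p q : List ℕ × (ℕ → ℕ)} (h : HCompat p q) :
    p.1 <+: q.1 ∨ q.1 <+: p.1 := by
  obtain ⟨r, -, ⟨hp, -⟩, ⟨hq, -⟩⟩ := h
  exact List.prefix_or_prefix_of_prefix hp hq

/-- If `M` is a set of pairwise `⊑`-incomparable finite sequences,
then no element of `Ω_M⁺` is a proper initial segment of another, and consequently
`{(η, η⌢0^ω) : η ∈ Ω_M⁺}` is an antichain in Hechler forcing. -/
theorem OmegaPlus_antichain
    (M : Set (List ℕ))
    (hM : ∀ η ∈ M, ∀ ν ∈ M, η <+: ν → η = ν) :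
    (∀ η ∈ OmegaPlus M, ∀ ν ∈ OmegaPlus M, η <+: ν → η = ν) ∧
    (∀ η ∈ OmegaPlus M, ∀ ν ∈ OmegaPlus M, η ≠ ν →
      ¬ HCompat (η, fun n => η.getD n 0) (ν, fun n => ν.getD n 0)) := by
  have hΩ : PrefixFree (OmegaPlus M) := OmegaPlus.prefixFree hM
  refine ⟨hΩ, fun η hη ν hν hne hc => ?_⟩
  rcases hc.prefix_or_prefix with h | h
  · exact hne (hΩ η hη ν hν h)
  · exact hne (hΩ ν hν η hη h).symm
end
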